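/- Let s and n be positive integers, 0 ≤ k ≤ n−1, let d ≥ 2 be a divisor of sn+2, and let ω ∈ ℂ be a primitive d-th root of unity. Then the limit, as the complex variable q tends to ω within ℂ ∖ {ω}, of G(s,n,k;q) = (1/[k+1]_q)·[[sn+k+1, k]]_q·[[n−1, k]]_q equals: C((sn+k+1)/2, (k+1)/2)·C((n−2)/2, (k−1)/2) if d = 2, k is odd, and n is even; C((sn+2+k)/d − 1, k/d)·C(⌊(n−1)/d⌋, k/d) if d ≥ 2 and d divides k; and 0 otherwise. -/

import Mathlib

open Filter Topology

/-- The q-integer `[m]_q = 1 + q + ... + q^(m-1)`. -/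
noncomputable def qInt (q : ℂ) (m : ℕ) : ℂ := ∑ i ∈ Finset.range m, q ^ i

/-- The Gaussian binomial coefficient `[[m, k]]` as a polynomial over ℂ,
defined by the Pascal recurrence `[[m+1, k+1]] = [[m, k]] + q^(k+1)·[[m, k+1]]`;
it is the unique polynomial with `[[m,k]]·[k]!_q·[m−k]!_q = [m]!_q` for `0 ≤ k ≤ m`,
and it vanishes for `k > m`. -/
noncomputable def gbPoly : ℕ → ℕ → Polynomial ℂ
  | _, 0 => 1
  | 0, _ + 1 => 0
  | m + 1, k + 1 => gbPoly m k + Polynomial.X ^ (k + 1) * gbPoly m (k + 1)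

/-- Evaluation of the Gaussian binomial `[[m, k]]` at `q : ℂ`. -/
noncomputable def gb (m k : ℕ) (q : ℂ) : ℂ := (gbPoly m k).eval q

/-- Gaussian binomial with integer lower index (zero for negative lower index). -/
noncomputable def gbZ (m : ℕ) (k : ℤ) (q : ℂ) : ℂ := if 0 ≤ k then gb m k.toNat q else 0

/-- Binomial coefficient with integer lower index (zero for negative lower index). -/
def chooseZ (a : ℕ) (b : ℤ) : ℕ := if 0 ≤ b then a.choose b.toNat else 0

/-- `x` lies strictly inside the open counterclockwise arc from `a` to `b`. -/
def InArc {N : ℕ} (a b x : ZMod N) : Prop :=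
  0 < (x - a).val ∧ (x - a).val < (b - a).val

/-- An unordered pair of vertices of the `N`-gon is a diagonal. -/
def IsDiagonal {N : ℕ} (D : Sym2 (ZMod N)) : Prop :=
  ∃ a b : ZMod N, D = Sym2.mk a b ∧ b ≠ a ∧ b ≠ a + 1 ∧ b ≠ a - 1

/-- Two chords cross: exactly one endpoint of the second lies in the open arc
from `a` to `b`, the other in the open arc from `b` to `a`. -/
def Crosses {N : ℕ} (D E : Sym2 (ZMod N)) : Prop :=
  ∃ a b c d : ZMod N, D = Sym2.mk a b ∧ E = Sym2.mk c d ∧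
    InArc a b c ∧ InArc b a d

/-- A diagonal `{a,b}` is `s`-divisible: the representative of `b − a` is ≡ 1 (mod s). -/
def SDivisible (s : ℕ) {N : ℕ} (D : Sym2 (ZMod N)) : Prop :=
  ∃ a b : ZMod N, D = Sym2.mk a b ∧ (b - a).val % s = 1 % s

/-- Rotation of a chord by `r`. -/
def rotChord {N : ℕ} (r : ZMod N) (D : Sym2 (ZMod N)) : Sym2 (ZMod N) :=
  Sym2.map (· + r) D

/-- An `s`-divisible dissection of the `N`-gon using `k` noncrossing diagonals. -/
def IsDissection (s N k : ℕ) (π : Finset (Sym2 (ZMod N))) : Prop :=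
  π.card = k ∧ (∀ D ∈ π, IsDiagonal D ∧ SDivisible s D) ∧
    ∀ D ∈ π, ∀ E ∈ π, D ≠ E → ¬ Crosses D E

/-- Rotation of a dissection by `r`. -/
def rotDissection {N : ℕ} (r : ZMod N) (π : Finset (Sym2 (ZMod N))) :
    Finset (Sym2 (ZMod N)) := π.image (rotChord r)

/-- A diameter of the `(2sn+2)`-gon. -/
def IsDiameter (s n : ℕ) (D : Sym2 (ZMod (2*s*n+2))) : Prop :=
  ∃ a : ZMod (2*s*n+2), D = Sym2.mk a (a + ((s*n+1 : ℕ) : ZMod (2*s*n+2)))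

/-- Antipodal copy of a chord in the `(2sn+2)`-gon. -/
def antipodal (s n : ℕ) (D : Sym2 (ZMod (2*s*n+2))) : Sym2 (ZMod (2*s*n+2)) :=
  rotChord ((s*n+1 : ℕ) : ZMod (2*s*n+2)) D

/-- A B-diagonal: a diameter, or a non-diameter `s`-divisible diagonal together
with its antipodal copy. -/
def IsBDiagonal (s n : ℕ) (B : Finset (Sym2 (ZMod (2*s*n+2)))) : Prop :=
  (∃ D, IsDiameter s n D ∧ B = {D}) ∨
  (∃ D, IsDiagonal D ∧ SDivisible s D ∧ ¬ IsDiameter s n D ∧ B = {D, antipodal s n D})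

/-- A `k`-element set of pairwise noncrossing B-diagonals. -/
def IsBFace (s n k : ℕ) (π : Finset (Finset (Sym2 (ZMod (2*s*n+2))))) : Prop :=
  π.card = k ∧ (∀ B ∈ π, IsBDiagonal s n B) ∧
    ∀ B₁ ∈ π, ∀ B₂ ∈ π, ∀ D ∈ B₁, ∀ E ∈ B₂, D ≠ E → ¬ Crosses D E

/-- Rotation of a set of B-diagonals by `r`. -/
def rotBFace (s n : ℕ) (r : ZMod (2*s*n+2)) (π : Finset (Finset (Sym2 (ZMod (2*s*n+2))))) :
    Finset (Finset (Sym2 (ZMod (2*s*n+2)))) := π.image (fun B => B.image (rotChord r))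

/-- The edges of a graph on the vertices of the `N`-gon are pairwise noncrossing chords. -/
def NoncrossingEdges {N : ℕ} (G : SimpleGraph (ZMod N)) : Prop :=
  ∀ e ∈ G.edgeSet, ∀ f ∈ G.edgeSet, e ≠ f → ¬ Crosses e f

/-- Rotation of a graph on `ZMod N` by `r`. -/
def rotGraph {N : ℕ} (r : ZMod N) (G : SimpleGraph (ZMod N)) : SimpleGraph (ZMod N) :=
  G.map (Equiv.addRight r).toEmbedding

namespace Stmt5Aux

lemma gbPoly_base (m : ℕ) : gbPoly m 0 = 1 := by cases m <;> rfl

lemma gb_base (m : ℕ) (q : ℂ) : gb m 0 q = 1 := by simp [gb, gbPoly_base]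

lemma gb_succ (m k : ℕ) (q : ℂ) :
    gb (m + 1) (k + 1) q = gb m k q + q ^ (k + 1) * gb m (k + 1) q := by
  simp [gb, gbPoly]

lemma gbPoly_eq_zero : ∀ {m k : ℕ}, m < k → gbPoly m k = 0
  | 0, _ + 1, _ => rfl
  | m + 1, k + 1, h => by
      show gbPoly m k + Polynomial.X ^ (k + 1) * gbPoly m (k + 1) = 0
      rw [gbPoly_eq_zero (by omega), gbPoly_eq_zero (by omega)]; ring

lemma gb_eq_zero {m k : ℕ} (h : m < k) (q : ℂ) : gb m k q = 0 := by
  simp [gb, gbPoly_eq_zero h]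

lemma gb_diag : ∀ (m : ℕ) (q : ℂ), gb m m q = 1
  | 0, q => gb_base 0 q
  | m + 1, q => by
      rw [gb_succ, gb_diag m q, gb_eq_zero (by omega), mul_zero, add_zero]

lemma qInt_add (q : ℂ) (a b : ℕ) : qInt q (a + b) = qInt q a + q ^ a * qInt q b := by
  rw [qInt, qInt, qInt, Finset.sum_range_add, Finset.mul_sum]
  congr 1; apply Finset.sum_congr rfl; intro i _; rw [pow_add]

lemma qInt_zero (q : ℂ) : qInt q 0 = 0 := by simp [qInt]

lemma qInt_one (q : ℂ) : qInt q 1 = 1 := by simp [qInt]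

lemma pow_eq_one_of_qInt {q : ℂ} {m : ℕ} (h : qInt q m = 0) : q ^ m = 1 := by
  have := geom_sum_mul q m
  rw [show (∑ i ∈ Finset.range m, q ^ i) = qInt q m from rfl, h, zero_mul] at this
  exact sub_eq_zero.mp this.symm

lemma gb_one (m : ℕ) (q : ℂ) : gb m 1 q = qInt q m := by
  induction m with
  | zero => rw [gb_eq_zero (by omega), qInt_zero]
  | succ m ih =>
      rw [gb_succ, gb_base, ih, show m + 1 = 1 + m from by omega, qInt_add, qInt_one, pow_one]

/-- q-factorial -/
noncomputable def qf (q : ℂ) (m : ℕ) : ℂ := ∏ j ∈ Finset.range m, qInt q (j + 1)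

lemma qf_zero (q : ℂ) : qf q 0 = 1 := by simp [qf]

lemma qf_succ (q : ℂ) (m : ℕ) : qf q (m + 1) = qf q m * qInt q (m + 1) :=
  Finset.prod_range_succ _ _

lemma qf_ne_zero (q : ℂ) (m : ℕ) (h : ∀ i, 0 < i → i ≤ m → qInt q i ≠ 0) : qf q m ≠ 0 :=
  Finset.prod_ne_zero_iff.mpr fun i hi =>
    h (i + 1) i.succ_pos (Finset.mem_range.mp hi)

lemma gb_fact (q : ℂ) : ∀ m k, k ≤ m → gb m k q * (qf q k * qf q (m - k)) = qf q m := by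
  intro m
  induction m with
  | zero =>
      intro k hk
      obtain rfl : k = 0 := by omega
      simp [gb_base, qf_zero]
  | succ m ih =>
      intro k hk
      match k with
      | 0 => simp [gb_base, qf_zero]
      | k + 1 =>
        rcases eq_or_lt_of_le hk with h | h
        · obtain rfl : k = m := by omega
          rw [gb_succ, gb_diag, gb_eq_zero (by omega), mul_zero, add_zero,
            Nat.sub_self, qf_zero, mul_one, one_mul]
        · have h1 := ih k (by omega)
          have h2 := ih (k + 1) (by omega)
          have hs2 : m - k = m - (k + 1) + 1 := by omega
          have hs3 : m + 1 - (k + 1) = m - (k + 1) + 1 := by omega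
          rw [hs2] at h1
          simp only [qf_succ] at h1 h2 ⊢
          rw [gb_succ, hs3]
          simp only [qf_succ]
          have key : qInt q (m + 1) = qInt q (k + 1) + q ^ (k + 1) * qInt q (m - (k + 1) + 1) := by
            rw [← qInt_add]
            congr 1
            omega
          linear_combination qInt q (k + 1) * h1 + q ^ (k + 1) * qInt q (m - (k + 1) + 1) * h2 -
            qf q m * key


lemma qInt_d_zero {d : ℕ} (hd : 2 ≤ d) {ω : ℂ} (hω1 : ω ^ d = 1)
    (hω2 : ∀ e : ℕ, 0 < e → e < d → ω ^ e ≠ 1) : qInt ω d = 0 := by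
  have hne : ω ≠ 1 := by
    intro h
    exact hω2 1 one_pos (by omega) (by rw [h, one_pow])
  have h := geom_sum_mul ω d
  rw [show (∑ i ∈ Finset.range d, ω ^ i) = qInt ω d from rfl, hω1, sub_self] at h
  rcases mul_eq_zero.mp h with h | h
  · exact h
  · exact absurd (sub_eq_zero.mp h) hne

lemma qInt_ne_zero {d : ℕ} {ω : ℂ} (hω2 : ∀ e : ℕ, 0 < e → e < d → ω ^ e ≠ 1)
    {i : ℕ} (h0 : 0 < i) (hi : i < d) : qInt ω i ≠ 0 :=
  fun h => hω2 i h0 hi (pow_eq_one_of_qInt h)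

lemma qInt_period {d : ℕ} {ω : ℂ} (hId : qInt ω d = 0) :
    ∀ t r, qInt ω (t * d + r) = qInt ω r := by
  intro t
  induction t with
  | zero => simp
  | succ t ih =>
      intro r
      have h : (t + 1) * d + r = (t * d + r) + d := by ring
      rw [h, qInt_add, hId, mul_zero, add_zero, ih r]

lemma gb_d_zero {d : ℕ} (hd : 2 ≤ d) {ω : ℂ} (hω1 : ω ^ d = 1)
    (hω2 : ∀ e : ℕ, 0 < e → e < d → ω ^ e ≠ 1) {j : ℕ} (h0 : 0 < j) (hj : j < d) :
    gb d j ω = 0 := by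
  have hf := gb_fact ω d j hj.le
  have hqd : qf ω d = 0 := by
    have h : d = (d - 1) + 1 := by omega
    rw [h, qf_succ, Nat.sub_add_cancel (by omega : 1 ≤ d), qInt_d_zero hd hω1 hω2, mul_zero]
  rw [hqd] at hf
  have h1 : qf ω j ≠ 0 := qf_ne_zero _ _ fun i hi1 hi2 => qInt_ne_zero hω2 hi1 (by omega)
  have h2 : qf ω (d - j) ≠ 0 := qf_ne_zero _ _ fun i hi1 hi2 => qInt_ne_zero hω2 hi1 (by omega)
  rcases mul_eq_zero.mp hf with h | h
  · exact h
  · exact absurd h (mul_ne_zero h1 h2)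

lemma gb_step {d : ℕ} (hd : 2 ≤ d) {ω : ℂ} (hω1 : ω ^ d = 1)
    (hω2 : ∀ e : ℕ, 0 < e → e < d → ω ^ e ≠ 1) :
    ∀ m k, gb (m + d) k ω = gb m k ω + (if d ≤ k then gb m (k - d) ω else 0) := by
  intro m
  induction m with
  | zero =>
      intro k
      rw [Nat.zero_add]
      rcases Nat.lt_trichotomy k d with h | h | h
      · rcases Nat.eq_zero_or_pos k with rfl | hk0
        · rw [gb_base, gb_base, if_neg (by omega)]; ring
        · rw [gb_d_zero hd hω1 hω2 hk0 h, gb_eq_zero hk0, if_neg (by omega)]; ring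
      · subst h
        rw [gb_diag, gb_eq_zero (by omega), if_pos le_rfl, Nat.sub_self, gb_base]; ring
      · rw [gb_eq_zero h, gb_eq_zero (by omega), if_pos (by omega), gb_eq_zero (by omega)]; ring
  | succ m ih =>
      intro k
      match k with
      | 0 => rw [gb_base, gb_base, if_neg (by omega)]; ring
      | k + 1 =>
        have h0 : m + 1 + d = (m + d) + 1 := by omega
        rw [h0, gb_succ (m + d) k ω, ih k, ih (k + 1), gb_succ m k ω]
        by_cases h1 : d ≤ k
        · rw [if_pos h1, if_pos (by omega), if_pos (by omega)]
          have h2 : k + 1 - d = (k - d) + 1 := by omega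
          rw [h2, gb_succ m (k - d) ω]
          have h3 : ω ^ (k + 1) = ω ^ (k - d + 1) := by
            rw [show k + 1 = (k - d + 1) + d from by omega, pow_add, hω1, mul_one]
          rw [h3]; ring
        · by_cases h2 : k + 1 = d
          · rw [if_neg h1, show k + 1 - d = 0 from by omega, gb_base, gb_base,
              show ω ^ (k + 1) = 1 from by rw [h2]; exact hω1]
            simp only [if_pos (show d ≤ k + 1 from by omega)]
            ring
          · rw [if_neg h1, if_neg (by omega), if_neg (by omega)]; ring

lemma gb_lucas {d : ℕ} (hd : 2 ≤ d) {ω : ℂ} (hω1 : ω ^ d = 1)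
    (hω2 : ∀ e : ℕ, 0 < e → e < d → ω ^ e ≠ 1) {b : ℕ} (hb : b < d) :
    ∀ a c e, e < d → gb (a * d + b) (c * d + e) ω = (a.choose c : ℂ) * gb b e ω := by
  intro a
  induction a with
  | zero =>
      intro c e he
      simp only [Nat.zero_mul, Nat.zero_add]
      match c with
      | 0 => simp only [Nat.zero_mul, Nat.zero_add, Nat.choose_self, Nat.cast_one, one_mul]
      | c + 1 =>
        have hle : d ≤ (c + 1) * d := Nat.le_mul_of_pos_left d c.succ_pos
        rw [gb_eq_zero (by omega), Nat.choose_zero_succ, Nat.cast_zero, zero_mul]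
  | succ a ih =>
      intro c e he
      have h0 : (a + 1) * d + b = (a * d + b) + d := by ring
      rw [h0, gb_step hd hω1 hω2 (a * d + b) (c * d + e)]
      match c with
      | 0 =>
        rw [if_neg (by simpa using by omega : ¬ d ≤ 0 * d + e), ih 0 e he]
        simp
      | c + 1 =>
        have hle : d ≤ (c + 1) * d := Nat.le_mul_of_pos_left d c.succ_pos
        rw [if_pos (by omega), show (c + 1) * d + e - d = c * d + e from by
          rw [Nat.succ_mul]; omega, ih (c + 1) e he, ih c e he, Nat.choose_succ_succ]
        push_cast; ring

lemma ev_pow_ne_one (ω : ℂ) (i : ℕ) (hi : 0 < i) : ∀ᶠ q in 𝓝[≠] ω, q ^ i ≠ 1 := by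
  have hfin : ({x : ℂ | x ^ i = 1} \ {ω}).Finite := by
    apply Set.Finite.subset (Set.Finite.subset (Polynomial.finite_setOf_isRoot
      (p := Polynomial.X ^ i - Polynomial.C (1 : ℂ))
      ((Polynomial.monic_X_pow_sub_C (1 : ℂ) hi.ne').ne_zero)) ?_) Set.diff_subset
    intro x hx
    simp only [Set.mem_setOf_eq, Polynomial.IsRoot, Polynomial.eval_sub, Polynomial.eval_pow,
      Polynomial.eval_X, Polynomial.eval_C, sub_eq_zero]
    exact hx
  have hmem : ({x : ℂ | x ^ i = 1} \ {ω})ᶜ ∈ 𝓝 ω :=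
    hfin.isClosed.isOpen_compl.mem_nhds (by simp)
  filter_upwards [nhdsWithin_le_nhds hmem, self_mem_nhdsWithin] with q h1 h2
  intro hq1
  exact h1 ⟨hq1, h2⟩

end Stmt5Aux

open Stmt5Aux

/-- Evaluation of `G(s,n,k;q) = (1/[k+1]_q)·[[sn+k+1,k]]_q·[[n−1,k]]_q`
at a primitive `d`-th root of unity `ω`, where `d ≥ 2` divides `sn+2`. -/
theorem stmt5 (s n k d : ℕ) (hs : 0 < s) (hn : 0 < n) (hk : k ≤ n - 1)
    (hd : 2 ≤ d) (hdvd : d ∣ (s * n + 2)) (ω : ℂ)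
    (hω1 : ω ^ d = 1) (hω2 : ∀ e : ℕ, 0 < e → e < d → ω ^ e ≠ 1) :
    Filter.Tendsto
      (fun q : ℂ => (qInt q (k + 1))⁻¹ * gb (s * n + k + 1) k q * gb (n - 1) k q)
      (𝓝[≠] ω)
      (𝓝 (if d = 2 ∧ Odd k ∧ Even n then
            ((Nat.choose ((s * n + k + 1) / 2) ((k + 1) / 2) *
              Nat.choose ((n - 2) / 2) ((k - 1) / 2) : ℕ) : ℂ)
          else if d ∣ k then
            ((Nat.choose ((s * n + 2 + k) / d - 1) (k / d) *
              Nat.choose ((n - 1) / d) (k / d) : ℕ) : ℂ)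
          else 0)) := by
  classical
  have hd0 : 0 < d := by omega
  have hsn : 0 < s * n := Nat.mul_pos hs hn
  obtain ⟨A0, hA0⟩ := hdvd
  obtain ⟨B, rfl⟩ : ∃ B, A0 = B + 1 := by
    rcases Nat.eq_zero_or_pos A0 with rfl | h
    · rw [Nat.mul_zero] at hA0; omega
    · exact ⟨A0 - 1, by omega⟩
  have hAz : (s : ℤ) * n + 2 = d * (B + 1) := by exact_mod_cast hA0
  have hId : qInt ω d = 0 := qInt_d_zero hd hω1 hω2
  have e1 : s * n + 1 = B * d + (d - 1) := by
    zify [show 1 ≤ d from by omega]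
    linear_combination hAz
  have hqsn : qInt ω (s * n + 1) = qInt ω (d - 1) := by
    rw [e1]; exact qInt_period hId B (d - 1)
  have hqd1 : qInt ω (d - 1) ≠ 0 := qInt_ne_zero hω2 (by omega) (by omega)
  have hIsn : qInt ω (s * n + 1) ≠ 0 := by rw [hqsn]; exact hqd1
  set L : ℂ := gb (s * n + k + 1) (k + 1) ω * gb (n - 1) k ω / qInt ω (s * n + 1) with hL
  have htend : Filter.Tendsto
      (fun q : ℂ => gb (s * n + k + 1) (k + 1) q * gb (n - 1) k q / qInt q (s * n + 1))
      (𝓝[≠] ω) (𝓝 L) := by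
    apply Filter.Tendsto.mono_left _ nhdsWithin_le_nhds
    have hc1 : Continuous fun q : ℂ => gb (s * n + k + 1) (k + 1) q :=
      (gbPoly (s * n + k + 1) (k + 1)).continuous
    have hc2 : Continuous fun q : ℂ => gb (n - 1) k q := (gbPoly (n - 1) k).continuous
    have hc3 : Continuous fun q : ℂ => qInt q (s * n + 1) :=
      continuous_finset_sum _ fun i _ => continuous_pow i
    exact ((hc1.tendsto ω).mul (hc2.tendsto ω)).div (hc3.tendsto ω) hIsn
  have heq : (fun q : ℂ => (qInt q (k + 1))⁻¹ * gb (s * n + k + 1) k q * gb (n - 1) k q)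
      =ᶠ[𝓝[≠] ω]
      (fun q : ℂ => gb (s * n + k + 1) (k + 1) q * gb (n - 1) k q / qInt q (s * n + 1)) := by
    have hev : ∀ᶠ q in 𝓝[≠] ω, ∀ i ∈ Finset.Icc 1 (s * n + k + 1), qInt q i ≠ 0 := by
      rw [Filter.eventually_all_finset]
      intro i hi
      rw [Finset.mem_Icc] at hi
      filter_upwards [ev_pow_ne_one ω i (by omega)] with q hq
      intro h0
      exact hq (pow_eq_one_of_qInt h0)
    filter_upwards [hev] with q hq
    have hfk : ∀ j, j ≤ s * n + k + 1 → qf q j ≠ 0 := fun j hj =>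
      qf_ne_zero q j fun i hi1 hi2 => hq i (Finset.mem_Icc.mpr ⟨hi1, by omega⟩)
    have h1 := gb_fact q (s * n + k + 1) k (by omega)
    have h2 := gb_fact q (s * n + k + 1) (k + 1) (by omega)
    rw [show s * n + k + 1 - k = s * n + 1 from by omega, qf_succ q (s * n)] at h1
    rw [show s * n + k + 1 - (k + 1) = s * n from by omega, qf_succ q k] at h2
    have hIk : qInt q (k + 1) ≠ 0 := hq (k + 1) (Finset.mem_Icc.mpr ⟨by omega, by omega⟩)
    have hIs : qInt q (s * n + 1) ≠ 0 := hq (s * n + 1) (Finset.mem_Icc.mpr ⟨by omega, by omega⟩)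
    have ck : qf q k ≠ 0 := hfk k (by omega)
    have cs : qf q (s * n) ≠ 0 := hfk (s * n) (by omega)
    have hcore : gb (s * n + k + 1) k q * qInt q (s * n + 1)
        = gb (s * n + k + 1) (k + 1) q * qInt q (k + 1) := by
      apply mul_right_cancel₀ (mul_ne_zero ck cs)
      linear_combination h1 - h2
    field_simp
    linear_combination gb (n - 1) k q * hcore
  have hfL : Filter.Tendsto
      (fun q : ℂ => (qInt q (k + 1))⁻¹ * gb (s * n + k + 1) k q * gb (n - 1) k q)
      (𝓝[≠] ω) (𝓝 L) := htend.congr' heq.symm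
  suffices hTL : (if d = 2 ∧ Odd k ∧ Even n then
            ((Nat.choose ((s * n + k + 1) / 2) ((k + 1) / 2) *
              Nat.choose ((n - 2) / 2) ((k - 1) / 2) : ℕ) : ℂ)
          else if d ∣ k then
            ((Nat.choose ((s * n + 2 + k) / d - 1) (k / d) *
              Nat.choose ((n - 1) / d) (k / d) : ℕ) : ℂ)
          else 0) = L by
    rw [hTL]; exact hfL
  by_cases hc1 : d = 2 ∧ Odd k ∧ Even n
  · rw [if_pos hc1]
    obtain ⟨hd2, ⟨u, hu⟩, ⟨v, hv⟩⟩ := hc1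
    subst hd2
    have l1 : gb (s * n + k + 1) (k + 1) ω = ((B + 1 + u).choose (u + 1) : ℂ) * gb 0 0 ω := by
      rw [show s * n + k + 1 = (B + 1 + u) * 2 + 0 from by omega,
        show k + 1 = (u + 1) * 2 + 0 from by omega]
      exact gb_lucas hd hω1 hω2 (by omega) (B + 1 + u) (u + 1) 0 (by omega)
    have l2 : gb (n - 1) k ω = ((v - 1).choose u : ℂ) * gb 1 1 ω := by
      rw [show n - 1 = (v - 1) * 2 + 1 from by omega, show k = u * 2 + 1 from by omega]
      exact gb_lucas hd hω1 hω2 (by omega) (v - 1) u 1 (by omega)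
    rw [hL, l1, l2, gb_base, gb_diag, hqsn, show (2 : ℕ) - 1 = 1 from rfl, qInt_one,
      show (s * n + k + 1) / 2 = B + 1 + u from by omega,
      show (k + 1) / 2 = u + 1 from by omega,
      show (n - 2) / 2 = v - 1 from by omega,
      show (k - 1) / 2 = u from by omega]
    push_cast
    ring
  · rw [if_neg hc1]
    by_cases hdk : d ∣ k
    · rw [if_pos hdk]
      obtain ⟨w, hw⟩ := hdk
      have hwz : (k : ℤ) = d * w := by exact_mod_cast hw
      obtain ⟨p, hp⟩ : ∃ p, (n - 1) / d = p := ⟨_, rfl⟩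
      obtain ⟨b0, hb0⟩ : ∃ b0, (n - 1) % d = b0 := ⟨_, rfl⟩
      have hb0d : b0 < d := by rw [← hb0]; exact Nat.mod_lt _ hd0
      have hdm5 : d * p + b0 = n - 1 := by
        have h5 := Nat.div_add_mod (n - 1) d
        rw [hp, hb0] at h5
        exact h5
      have eN : n - 1 = p * d + b0 := by rw [Nat.mul_comm]; omega
      have l1 : gb (s * n + k + 1) (k + 1) ω = ((B + w).choose w : ℂ) * gb (d - 1) 1 ω := by
        rw [show s * n + k + 1 = (B + w) * d + (d - 1) from by
            zify [show 1 ≤ d from by omega]; linear_combination hAz + hwz,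
          show k + 1 = w * d + 1 from by zify; linear_combination hwz]
        exact gb_lucas hd hω1 hω2 (by omega) (B + w) w 1 (by omega)
      have l2 : gb (n - 1) k ω = (p.choose w : ℂ) * gb b0 0 ω := by
        rw [eN, show k = w * d + 0 from by zify; linear_combination hwz]
        exact gb_lucas hd hω1 hω2 hb0d p w 0 (by omega)
      have hkd : k / d = w := by rw [hw]; exact Nat.mul_div_cancel_left w hd0
      have hsd : (s * n + 2 + k) / d = B + 1 + w := by
        rw [show s * n + 2 + k = d * (B + 1 + w) from by zify; linear_combination hAz + hwz]
        exact Nat.mul_div_cancel_left _ hd0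
      rw [hL, l1, l2, gb_one, gb_base, hqsn, hkd, hsd, hp,
        show B + 1 + w - 1 = B + w from by omega, eq_div_iff hqd1]
      push_cast
      ring
    · rw [if_neg hdk]
      have hr0 : k % d ≠ 0 := fun h => hdk (Nat.dvd_of_mod_eq_zero h)
      obtain ⟨r', hr'⟩ : ∃ r', k % d = r' + 1 := ⟨k % d - 1, by omega⟩
      have hrd : k % d < d := Nat.mod_lt _ hd0
      obtain ⟨c, hc⟩ : ∃ c, k / d = c := ⟨_, rfl⟩
      have hdm : d * c + (r' + 1) = k := by
        have h5 := Nat.div_add_mod k d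
        rw [hc, hr'] at h5
        exact h5
      have hdmz : (d : ℤ) * c + (r' + 1) = k := by exact_mod_cast hdm
      by_cases h3a : r' + 2 < d
      · have l1 : gb (s * n + k + 1) (k + 1) ω
            = ((B + 1 + c).choose c : ℂ) * gb r' (r' + 2) ω := by
          rw [show s * n + k + 1 = (B + 1 + c) * d + r' from by
              zify; linear_combination hAz - hdmz,
            show k + 1 = c * d + (r' + 2) from by zify; linear_combination -hdmz]
          exact gb_lucas hd hω1 hω2 (by omega) (B + 1 + c) c (r' + 2) h3a
        rw [hL, l1, gb_eq_zero (show r' < r' + 2 from by omega) ω, mul_zero, zero_mul, zero_div]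
      · have hr2 : r' + 2 = d := by omega
        obtain ⟨p, hp⟩ : ∃ p, (n - 1) / d = p := ⟨_, rfl⟩
        obtain ⟨b0, hb0⟩ : ∃ b0, (n - 1) % d = b0 := ⟨_, rfl⟩
        have hb0d : b0 < d := by rw [← hb0]; exact Nat.mod_lt _ hd0
        have hdm5 : d * p + b0 = n - 1 := by
          have h5 := Nat.div_add_mod (n - 1) d
          rw [hp, hb0] at h5
          exact h5
        have hb2 : b0 + 1 < d := by
          by_contra hcon
          have hbd : b0 = d - 1 := by omega
          have hdn : d ∣ n := ⟨p + 1, by rw [Nat.mul_add, Nat.mul_one]; omega⟩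
          have hdsn : d ∣ s * n := Dvd.dvd.mul_left hdn s
          have hd2' : d ∣ 2 := by
            have h6 := Nat.dvd_sub ⟨B + 1, hA0⟩ hdsn
            rwa [show s * n + 2 - s * n = 2 from by omega] at h6
          have hde : d = 2 := by
            have := Nat.le_of_dvd (by norm_num) hd2'
            omega
          subst hde
          apply hc1
          refine ⟨rfl, ?_, ?_⟩
          · rw [Nat.odd_iff]; omega
          · obtain ⟨t, ht⟩ := hdn
            exact ⟨t, by omega⟩
        have l2 : gb (n - 1) k ω = (p.choose c : ℂ) * gb b0 (r' + 1) ω := by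
          rw [show n - 1 = p * d + b0 from by rw [Nat.mul_comm]; omega,
            show k = c * d + (r' + 1) from by zify; linear_combination -hdmz]
          exact gb_lucas hd hω1 hω2 hb0d p c (r' + 1) (by omega)
        rw [hL, l2, gb_eq_zero (show b0 < r' + 1 from by omega) ω, mul_zero, mul_zero, zero_div]
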